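/- arXiv:1901.08320 — 3 statements merged into one kernel-verified Lean document; each statement's English description precedes it below -/
import Mathlib

section
/- Let F = a x^r y^{s+α} + b x^{r+α} y^s with a,b ∈ ℂ nonzero, 0 ≤ r ≤ s, α ≥ 1, and write r = qα + j with 0 ≤ j < α. If r + α > s, j = 0, r = s, and α > 1, then rk(F) = s + 2. -/
open MvPolynomial

noncomputable def lin (c : ℂ × ℂ) : MvPolynomial (Fin 2) ℂ :=
  C c.1 * X 0 + C c.2 * X 1

noncomputable def waringRank (d : ℕ) (F : MvPolynomial (Fin 2) ℂ) : ℕ :=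
  sInf {r | ∃ (a : Fin r → ℂ) (c : Fin r → ℂ × ℂ), F = ∑ i, C (a i) * lin (c i) ^ d}

/-!
Write `d = 2s + α` and `n = s + α`, and let `α ∣ s`, `α ≥ 2`.

Lower bound (apolarity): if `F = ∑_{i<m} a_i ℓ_i^d` with `m ≤ s + 1`, a nonzero form `κ` of
degree `m` vanishing at the points `ℓ_i` annihilates the normalised coefficient sequence of `F`,
which is supported at `s` and `s + α`. This gives `κ_u = 0` for `0 < u < α` and
`κ_t x + κ_{t+α} y = 0` for `t ≤ s`, so `κ` vanishes at every non-multiple of `α` up to `s + α`,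
in particular at `s + 1`, and then everywhere by descending induction.

Upper bound: take `v^α = -b/a` and `η` a primitive `n`-th root of unity. By orthogonality of
characters, the only interior coefficients of `∑_{p<n} (η^{pα} - 1) (v η^p x + y)^d` are those of
`x^s y^{s+α}` and `x^{s+α} y^s`, in the ratio of `F`'s. The weight vanishes for the `α` indices `p`
divisible by `n / α`, so after correcting the coefficients of `x^d` and `y^d` this writes `F` as
a sum of `s + 2` powers.
-/

open Finset

noncomputable def binaryExp (d k : ℕ) : Fin 2 →₀ ℕ :=
  Finsupp.single 0 k + Finsupp.single 1 (d - k)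

noncomputable def binaryForm (d : ℕ) (f : ℕ → ℂ) : MvPolynomial (Fin 2) ℂ :=
  ∑ k ∈ range (d + 1), monomial (binaryExp d k) (f k)

lemma binaryExp_injective (d : ℕ) : Function.Injective (binaryExp d) := fun k l h => by
  simpa [binaryExp] using DFunLike.congr_fun h 0

lemma coeff_binaryForm {d k : ℕ} (hk : k ≤ d) (f : ℕ → ℂ) :
    coeff (binaryExp d k) (binaryForm d f) = f k := by
  simp_rw [binaryForm, coeff_sum, coeff_monomial, (binaryExp_injective d).eq_iff]
  simp [Nat.lt_succ_iff.2 hk]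

lemma binaryForm_add (d : ℕ) (f g : ℕ → ℂ) :
    binaryForm d (f + g) = binaryForm d f + binaryForm d g := by
  simp [binaryForm, sum_add_distrib]

lemma binaryForm_congr {d : ℕ} {f g : ℕ → ℂ} (h : ∀ k ≤ d, f k = g k) :
    binaryForm d f = binaryForm d g :=
  sum_congr rfl fun k hk => by rw [h k (Nat.lt_succ_iff.1 (mem_range.1 hk))]

lemma binaryForm_sum {ι : Type*} (t : Finset ι) (d : ℕ) (f : ι → ℕ → ℂ) :
    binaryForm d (fun k => ∑ i ∈ t, f i k) = ∑ i ∈ t, binaryForm d (f i) := by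
  simp only [binaryForm, map_sum]
  exact sum_comm

lemma C_mul_X_pow_mul_X_pow_eq_binaryForm (x : ℂ) {k l d : ℕ} (h : k + l = d) :
    C x * X 0 ^ k * X 1 ^ l = binaryForm d (fun i => if i = k then x else 0) := by
  subst h
  simp only [binaryForm, apply_ite (monomial _), map_zero, sum_ite_eq', mem_range,
    show k < k + l + 1 by omega, if_true, binaryExp, Nat.add_sub_cancel_left,
    X_pow_eq_monomial, C_mul_monomial, monomial_mul, mul_one]

lemma binomial_eq_binaryForm (a b : ℂ) (s α : ℕ) :
    C a * X 0 ^ s * X 1 ^ (s + α) + C b * X 0 ^ (s + α) * X 1 ^ s =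
      binaryForm (s + s + α) fun k => (if k = s then a else 0) + if k = s + α then b else 0 := by
  rw [C_mul_X_pow_mul_X_pow_eq_binaryForm a (d := s + s + α) (by omega),
    C_mul_X_pow_mul_X_pow_eq_binaryForm b (d := s + s + α) (by omega), ← binaryForm_add]
  rfl

lemma C_mul_lin_pow_eq_binaryForm (x : ℂ) (c : ℂ × ℂ) (d : ℕ) :
    C x * lin c ^ d = binaryForm d fun k => d.choose k * (x * (c.1 ^ k * c.2 ^ (d - k))) := by
  rw [lin, add_pow, mul_sum, binaryForm]
  refine sum_congr rfl fun k _ => ?_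
  rw [mul_pow, mul_pow, ← C_pow, ← C_pow, X_pow_eq_monomial, X_pow_eq_monomial, C_mul_monomial,
    C_mul_monomial, monomial_mul, ← map_natCast (C (σ := Fin 2)), mul_comm _ (C _),
    C_mul_monomial, C_mul_monomial, binaryExp]
  ring_nf

lemma sum_C_mul_lin_pow_eq_binaryForm {ι : Type*} (t : Finset ι) (a : ι → ℂ)
    (c : ι → ℂ × ℂ) (d : ℕ) :
    ∑ i ∈ t, C (a i) * lin (c i) ^ d =
      binaryForm d fun k => d.choose k * ∑ i ∈ t, a i * ((c i).1 ^ k * (c i).2 ^ (d - k)) := by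
  simp only [mul_sum, binaryForm_sum, C_mul_lin_pow_eq_binaryForm]

lemma binaryForm_eq_add_extremes {d : ℕ} (hd : 0 < d) {f g : ℕ → ℂ}
    (h : ∀ k, 0 < k → k < d → f k = g k) :
    binaryForm d f = binaryForm d g + C (f d - g d) * lin (1, 0) ^ d +
      C (f 0 - g 0) * lin (0, 1) ^ d := by
  simp only [C_mul_lin_pow_eq_binaryForm, ← binaryForm_add]
  refine binaryForm_congr fun k hk => ?_
  rcases k.eq_zero_or_pos with rfl | hk0
  · simp [hd.ne']
  rcases hk.eq_or_lt with rfl | hkd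
  · simp [hk0.ne']
  · simp [h k hk0 hkd, hk0.ne', (Nat.sub_pos_of_lt hkd).ne']

lemma exists_fin_sum_C_mul_lin_pow_eq {ι : Type*} [Fintype ι] {N : ℕ}
    (hN : Fintype.card ι = N) (a : ι → ℂ) (c : ι → ℂ × ℂ) (d : ℕ) :
    ∃ (a' : Fin N → ℂ) (c' : Fin N → ℂ × ℂ),
      ∑ i, C (a i) * lin (c i) ^ d = ∑ i, C (a' i) * lin (c' i) ^ d :=
  let e := Fintype.equivFinOfCardEq hN
  ⟨a ∘ e.symm, c ∘ e.symm, (e.symm.sum_comp fun i => C (a i) * lin (c i) ^ d).symm⟩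

section Sequences

variable {K : Type*}

lemma exists_annihilator [Field K] (m : ℕ) (c : Fin m → K × K) :
    ∃ κ : ℕ → K, (∃ r, κ r ≠ 0) ∧ (∀ r, m < r → κ r = 0) ∧
      ∀ i, ∑ r ∈ range (m + 1), κ r * ((c i).1 ^ r * (c i).2 ^ (m - r)) = 0 := by
  have hdep : ¬ LinearIndependent K
      (fun (r : Fin (m + 1)) (i : Fin m) => (c i).1 ^ (r : ℕ) * (c i).2 ^ (m - r)) :=
    fun h => by simpa using h.fintype_card_le_finrank
  obtain ⟨g, hg, r, hr⟩ := Fintype.not_linearIndependent_iff.1 hdep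
  refine ⟨fun r => if h : r < m + 1 then g ⟨r, h⟩ else 0,
    ⟨r, by simpa [Fin.is_le] using hr⟩, fun r hr => dif_neg (by omega), fun i => ?_⟩
  rw [← Fin.sum_univ_eq_sum_range (fun r => (if h : r < m + 1 then g ⟨r, h⟩ else 0) * _)]
  simpa [Fin.is_le] using congrFun hg i

lemma sum_annihilator_mul_moment_eq_zero [CommSemiring K] {n m d j : ℕ} (a : Fin n → K)
    (c : Fin n → K × K) (κ : ℕ → K)
    (hκ : ∀ i, ∑ r ∈ range (m + 1), κ r * ((c i).1 ^ r * (c i).2 ^ (m - r)) = 0)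
    (hj : j + m ≤ d) :
    ∑ r ∈ range (m + 1), κ r * ∑ i, a i * ((c i).1 ^ (j + r) * (c i).2 ^ (d - (j + r))) =
      0 := by
  simp_rw [mul_sum]
  rw [sum_comm]
  refine sum_eq_zero fun i _ => ?_
  rw [← mul_zero (a i * ((c i).1 ^ j * (c i).2 ^ (d - m - j))), ← hκ i, mul_sum]
  refine sum_congr rfl fun r hr => ?_
  have hrm : r ≤ m := Nat.lt_succ_iff.1 (mem_range.1 hr)
  rw [pow_add, show d - (j + r) = (d - m - j) + (m - r) by omega, pow_add]
  ring

lemma sum_mul_ite_add_eq [Semiring K] {m : ℕ} {κ : ℕ → K} (hκ : ∀ r, m < r → κ r = 0)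
    (j t : ℕ) (x : K) :
    ∑ r ∈ range (m + 1), κ r * (if j + r = t then x else 0) =
      if j ≤ t then κ (t - j) * x else 0 := by
  simp_rw [mul_ite, mul_zero]
  by_cases hj : j ≤ t
  · simp_rw [show ∀ r, (j + r = t ↔ r = t - j) by omega, sum_ite_eq', mem_range, if_pos hj]
    split_ifs with h
    · rfl
    · rw [hκ _ (by omega), zero_mul]
  · simp [hj, show ∀ r, j + r ≠ t by omega]

lemma eq_zero_of_recurrence [Semiring K] [NoZeroDivisors K] {κ : ℕ → K} {x y : K}
    (hx : x ≠ 0) (hy : y ≠ 0) {s α : ℕ}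
    (hα : 2 ≤ α) (hs : α ∣ s) (hsupp : ∀ r, s + 1 < r → κ r = 0)
    (hlow : ∀ u, 0 < u → u < α → κ u = 0) (hrec : ∀ t ≤ s, κ t * x + κ (t + α) * y = 0)
    (r : ℕ) : κ r = 0 := by
  have hnondvd : ∀ u ≤ s + α, ¬ α ∣ u → κ u = 0 := by
    intro u
    induction u using Nat.strong_induction_on with
    | _ u ih =>
      intro hu hdvd
      rcases lt_or_ge u α with h | h
      · exact hlow u (Nat.pos_of_ne_zero (by rintro rfl; exact hdvd (dvd_zero α))) h
      · have hprev : ¬ α ∣ u - α := fun h' =>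
          hdvd (by simpa [Nat.sub_add_cancel h] using dvd_add h' dvd_rfl)
        have hstep := hrec (u - α) (by omega)
        rw [ih (u - α) (by omega) (by omega) hprev, Nat.sub_add_cancel h, zero_mul, zero_add]
          at hstep
        exact (mul_eq_zero.1 hstep).resolve_right hy
  have habove : ∀ u, s < u → κ u = 0 := by
    intro u hu
    rcases (Nat.succ_le_of_lt hu).eq_or_lt with h | h
    · refine h ▸ hnondvd (s + 1) (by omega) fun h' => ?_
      have := Nat.le_of_dvd one_pos ((Nat.dvd_add_right hs).1 h')
      omega
    · exact hsupp u h
  have hdesc : ∀ n t, s < t + n → κ t = 0 := by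
    intro n
    induction n with
    | zero => exact habove
    | succ n ih =>
      intro t ht
      by_cases h : s < t + n
      · exact ih t h
      · have hstep := hrec t (by omega)
        rw [ih (t + α) (by omega), zero_mul, add_zero] at hstep
        exact (mul_eq_zero.1 hstep).resolve_right hx
  exact hdesc (s + 1) r (by omega)

lemma eq_zero_of_annihilates_binomial [Semiring K] [NoZeroDivisors K] {κ : ℕ → K} {x y : K}
    (hx : x ≠ 0) (hy : y ≠ 0)
    {m s α : ℕ} (hα : 2 ≤ α) (hs : α ∣ s) (hm : m ≤ s + 1) (hκ : ∀ r, m < r → κ r = 0)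
    (h : ∀ j, j + m ≤ s + s + α → ∑ r ∈ range (m + 1),
      κ r * ((if j + r = s then x else 0) + (if j + r = s + α then y else 0)) = 0)
    (r : ℕ) : κ r = 0 := by
  have h' : ∀ j, j + m ≤ s + s + α →
      (if j ≤ s then κ (s - j) * x else 0) + (if j ≤ s + α then κ (s + α - j) * y else 0) = 0 :=
    fun j hj => by simpa only [mul_add, sum_add_distrib, sum_mul_ite_add_eq hκ] using h j hj
  refine eq_zero_of_recurrence hx hy hα hs (fun r hr => hκ r (by omega)) (fun u hu hua => ?_)
    (fun t ht => ?_) r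
  · have hj := h' (s + α - u) (by omega)
    rw [if_neg (by omega), if_pos (by omega), Nat.sub_sub_self (by omega), zero_add] at hj
    exact (mul_eq_zero.1 hj).resolve_right hy
  · have hj := h' (s - t) (by omega)
    rwa [if_pos (by omega), if_pos (by omega), Nat.sub_sub_self ht,
      show s + α - (s - t) = t + α by omega] at hj

lemma IsPrimitiveRoot.sum_range_pow_mul [Field K] {η : K} {n : ℕ} (hη : IsPrimitiveRoot η n)
    (k : ℕ) : ∑ p ∈ range n, η ^ (p * k) = if n ∣ k then (n : K) else 0 := by
  simp_rw [mul_comm _ k, pow_mul]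
  split_ifs with h
  · simp [(hη.pow_eq_one_iff_dvd k).2 h]
  · have hk : η ^ k ≠ 1 := mt (hη.pow_eq_one_iff_dvd k).1 h
    rw [geom_sum_eq hk, ← pow_mul, mul_comm, pow_mul, hη.pow_eq_one, one_pow, sub_self,
      zero_div]

lemma IsPrimitiveRoot.sum_range_pow_sub_one_mul_pow [Field K] {η : K} {n : ℕ}
    (hη : IsPrimitiveRoot η n) (v : K) (α k : ℕ) :
    ∑ p ∈ range n, ((η ^ p) ^ α - 1) * (v * η ^ p) ^ k =
      v ^ k * ((if n ∣ α + k then (n : K) else 0) - if n ∣ k then (n : K) else 0) := by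
  rw [← hη.sum_range_pow_mul, ← hη.sum_range_pow_mul, ← sum_sub_distrib, mul_sum]
  exact sum_congr rfl fun p _ => by ring

end Sequences

lemma le_of_binomial_eq_sum {a b : ℂ} (ha : a ≠ 0) (hb : b ≠ 0) {s α m : ℕ} (hα : 2 ≤ α)
    (hs : α ∣ s) (A : Fin m → ℂ) (c : Fin m → ℂ × ℂ)
    (hF : C a * X 0 ^ s * X 1 ^ (s + α) + C b * X 0 ^ (s + α) * X 1 ^ s =
      ∑ i, C (A i) * lin (c i) ^ (s + s + α)) :
    s + 2 ≤ m := by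
  by_contra! hm
  set d := s + s + α
  have hmoment : ∀ k ≤ d, ∑ i, A i * ((c i).1 ^ k * (c i).2 ^ (d - k)) =
      (if k = s then a / d.choose s else 0) +
        if k = s + α then b / d.choose (s + α) else 0 := by
    intro k hk
    have hcoeff := congrArg (coeff (binaryExp d k)) hF
    rw [binomial_eq_binaryForm, sum_C_mul_lin_pow_eq_binaryForm, coeff_binaryForm hk,
      coeff_binaryForm hk] at hcoeff
    have hchoose : (d.choose k : ℂ) ≠ 0 := by exact_mod_cast (Nat.choose_pos hk).ne'
    rw [eq_comm, mul_comm, ← eq_div_iff hchoose] at hcoeff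
    rw [hcoeff]
    split_ifs <;> first | omega | simp_all [add_div]
  have hx : a / d.choose s ≠ 0 :=
    div_ne_zero ha (by exact_mod_cast (Nat.choose_pos (by omega)).ne')
  have hy : b / d.choose (s + α) ≠ 0 :=
    div_ne_zero hb (by exact_mod_cast (Nat.choose_pos (by omega)).ne')
  obtain ⟨κ, ⟨r, hr⟩, hκ, hann⟩ := exists_annihilator m c
  refine hr (eq_zero_of_annihilates_binomial hx hy hα hs (by omega) hκ (fun j hj => ?_) r)
  refine (sum_congr rfl fun r hr => ?_).trans
    (sum_annihilator_mul_moment_eq_zero A c κ hann hj)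
  rw [hmoment _ (by have := mem_range.1 hr; omega)]

lemma binomial_eq_sum_roots_add {s α : ℕ} {a b v η : ℂ} (ha : a ≠ 0) (hv : v ^ α = -b / a)
    (hv0 : v ≠ 0) (hα : 0 < α) (hη : IsPrimitiveRoot η (s + α)) :
    ∃ K x y : ℂ, C a * X 0 ^ s * X 1 ^ (s + α) + C b * X 0 ^ (s + α) * X 1 ^ s =
      ∑ p ∈ range (s + α), C (K * ((η ^ p) ^ α - 1)) * lin (v * η ^ p, 1) ^ (s + s + α) +
        C x * lin (1, 0) ^ (s + s + α) + C y * lin (0, 1) ^ (s + s + α) := by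
  simp only [binomial_eq_binaryForm, sum_C_mul_lin_pow_eq_binaryForm]
  have hchoose : ((s + s + α).choose s : ℂ) ≠ 0 := by
    exact_mod_cast (Nat.choose_pos (by omega)).ne'
  have hn : ((s + α : ℕ) : ℂ) ≠ 0 := by exact_mod_cast (show s + α ≠ 0 by omega)
  refine ⟨a / ((s + s + α).choose s * v ^ s * (s + α : ℕ)), _, _,
    binaryForm_eq_add_extremes (by omega) fun k hk0 hkd => ?_⟩
  simp only [one_pow, mul_one, mul_assoc, ← mul_sum, hη.sum_range_pow_sub_one_mul_pow]
  rcases eq_or_ne k s with rfl | hks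
  · have h1 : k + α ∣ α + k := ⟨1, by omega⟩
    have h2 : ¬ k + α ∣ k := Nat.not_dvd_of_pos_of_lt hk0 (by omega)
    rw [if_pos rfl, if_neg (show k ≠ k + α by omega), if_pos h1, if_neg h2]
    field_simp
    ring
  rcases eq_or_ne k (s + α) with rfl | hkn
  · have h1 : ¬ s + α ∣ α + (s + α) := by
      rw [Nat.dvd_add_self_right]
      exact Nat.not_dvd_of_pos_of_lt hα (by omega)
    rw [if_neg hks, if_pos rfl, if_neg h1, if_pos dvd_rfl,
      Nat.choose_symm_of_eq_add (show s + s + α = (s + α) + s by omega), pow_add, hv]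
    field_simp
    ring
  · have h1 : ¬ s + α ∣ α + k := fun h => hks (by
      have := Nat.eq_of_dvd_of_lt_two_mul (by omega) h (by omega)
      omega)
    have h2 : ¬ s + α ∣ k := fun h =>
      hkn (Nat.eq_of_dvd_of_lt_two_mul (by omega) h (by omega))
    simp [hks, hkn, h1, h2]

lemma exists_binomial_eq_sum {a b : ℂ} (ha : a ≠ 0) (hb : b ≠ 0) {s α : ℕ} (hα : 0 < α)
    (hs : α ∣ s) :
    ∃ (A : Fin (s + 2) → ℂ) (c : Fin (s + 2) → ℂ × ℂ),
      C a * X 0 ^ s * X 1 ^ (s + α) + C b * X 0 ^ (s + α) * X 1 ^ s =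
        ∑ i, C (A i) * lin (c i) ^ (s + s + α) := by
  obtain ⟨q, rfl⟩ := hs
  obtain ⟨v, hv⟩ := IsAlgClosed.exists_pow_nat_eq (-b / a) hα
  have hv0 : v ≠ 0 := by
    rintro rfl
    simp [zero_pow hα.ne', ha, hb, eq_comm] at hv
  set n := α * q + α
  have hη := Complex.isPrimitiveRoot_exp n (by omega)
  set η := Complex.exp (2 * Real.pi * Complex.I / n)
  obtain ⟨K, x, y, hF⟩ := binomial_eq_sum_roots_add ha hv hv0 hα hη
  set T := range n \ (range α).image ((q + 1) * ·)
  set d := α * q + α * q + α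
  have hsum : ∑ p ∈ T, C (K * ((η ^ p) ^ α - 1)) * lin (v * η ^ p, 1) ^ d =
      ∑ p ∈ range n, C (K * ((η ^ p) ^ α - 1)) * lin (v * η ^ p, 1) ^ d := by
    refine sum_subset sdiff_subset fun p hp hpT => ?_
    obtain ⟨l, -, rfl⟩ : ∃ l < α, (q + 1) * l = p := by simpa [T, hp] using hpT
    rw [← pow_mul, show (q + 1) * l * α = n * l by ring, pow_mul, hη.pow_eq_one, one_pow,
      sub_self, mul_zero, C_0, zero_mul]
  have hcard : Fintype.card (T ⊕ Fin 2) = α * q + 2 := by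
    have hsub : (range α).image ((q + 1) * ·) ⊆ range n := by
      intro p hp
      obtain ⟨l, hl, rfl⟩ := mem_image.1 hp
      simp only [mem_range] at hl ⊢
      nlinarith [show n = (q + 1) * α by ring]
    rw [Fintype.card_sum, Fintype.card_coe, card_sdiff_of_subset hsub,
      card_image_of_injective _ (mul_right_injective₀ q.succ_ne_zero), card_range, card_range,
      Fintype.card_fin]
    omega
  obtain ⟨A, c, hAc⟩ := exists_fin_sum_C_mul_lin_pow_eq hcard
    (Sum.elim (fun p => K * ((η ^ (p : ℕ)) ^ α - 1)) ![x, y])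
    (Sum.elim (fun p => (v * η ^ (p : ℕ), 1)) ![(1, 0), (0, 1)]) d
  refine ⟨A, c, ?_⟩
  rw [← hAc, Fintype.sum_sum_type, Fin.sum_univ_two]
  simp only [Sum.elim_inl, Sum.elim_inr]
  rw [sum_coe_sort T (fun p => C (K * ((η ^ p) ^ α - 1)) * lin (v * η ^ p, 1) ^ _), hsum, hF]
  simp [n, add_assoc]

theorem waring_rank_binomial_case_j0_req_s_general (a b : ℂ) (ha : a ≠ 0) (hb : b ≠ 0)
    (r s α q j : ℕ)
    (hqj : r = q * α + j)
    (hj0 : j = 0) (hre : r = s) (hα1 : 1 < α) :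
    waringRank (r + s + α)
      (C a * X (0 : Fin 2) ^ r * X 1 ^ (s + α) + C b * X (0 : Fin 2) ^ (r + α) * X 1 ^ s)
      = s + 2 := by
  subst hj0 hre
  have hs : α ∣ r := ⟨q, by rw [hqj]; ring⟩
  obtain ⟨A, c, hF⟩ := exists_binomial_eq_sum ha hb (by omega) hs
  exact le_antisymm (Nat.sInf_le ⟨A, c, hF⟩) <|
    le_csInf ⟨_, A, c, hF⟩ fun _ ⟨A', c', hF'⟩ => le_of_binomial_eq_sum ha hb hα1 hs A' c' hF'

theorem waring_rank_binomial_case_j0_req_s (a b : ℂ) (ha : a ≠ 0) (hb : b ≠ 0)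
    (r s α q j : ℕ) (hrs : r ≤ s) (hα : 1 ≤ α)
    (hqj : r = q * α + j) (hj : j < α)
    (hdelta : s < r + α) (hj0 : j = 0) (hre : r = s) (hα1 : 1 < α) :
    waringRank (r + s + α)
      (C a * X (0 : Fin 2) ^ r * X 1 ^ (s + α) + C b * X (0 : Fin 2) ^ (r + α) * X 1 ^ s)
      = s + 2 :=
  waring_rank_binomial_case_j0_req_s_general a b ha hb r s α q j hqj hj0 hre hα1
end

section
/- For r ≥ 1, the Waring rank over ℂ of F = x^r y^r (x + y) is r + 1. -/
open MvPolynomial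

/-!
Upper bound: if `ω` is a primitive `(r + 2)`-th root of unity, the root-of-unity filter
`∑ k < r + 2, ω ^ (k * s) = (r + 2) * [r + 2 ∣ s]` shows that
`∑ k < r + 2, (ω ^ (2 * k) - ω ^ k) * (x - ω ^ k * y) ^ (2 * r + 1)` is a nonzero multiple of
`x ^ r * y ^ r * (x + y)`; its term `k = 0` vanishes, which leaves `r + 1` powers.

Lower bound (Sylvester): the `(r + 1) × (r + 2)` catalecticant matrix of `x ^ r * y ^ r * (x + y)`
has rank `r + 1`, while the catalecticant of a sum of `n` powers of linear forms factors through
`ℂ ^ n`.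
-/

open Finset

theorem IsPrimitiveRoot.sum_pow_mul_eq_ite {R : Type*} [CommRing R] [IsDomain R] {ω : R} {N : ℕ}
    (hω : IsPrimitiveRoot ω N) (s : ℕ) :
    ∑ k ∈ range N, ω ^ (k * s) = if N ∣ s then (N : R) else 0 := by
  simp_rw [mul_comm _ s, pow_mul]
  split_ifs with h
  · simp [(hω.pow_eq_one_iff_dvd s).2 h]
  · have hne : ω ^ s ≠ 1 := mt (hω.pow_eq_one_iff_dvd s).1 h
    have hgeom := geom_sum_mul (ω ^ s) N
    rw [pow_right_comm, hω.pow_eq_one, one_pow, sub_self] at hgeom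
    exact (mul_eq_zero.1 hgeom).resolve_right (sub_ne_zero.2 hne)

theorem Nat.dvd_iff_eq_of_lt_two_mul {a n : ℕ} (ha : 0 < a) (han : a < 2 * n) : n ∣ a ↔ a = n :=
  ⟨fun h => Nat.eq_of_dvd_of_lt_two_mul ha.ne' h han, fun h => h ▸ dvd_refl n⟩

noncomputable def expVec (d m : ℕ) : Fin 2 →₀ ℕ :=
  Finsupp.single 0 m + Finsupp.single 1 (d - m)

theorem expVec_injective (d : ℕ) : Function.Injective (expVec d) := fun m m' h => by
  simpa [expVec] using DFunLike.congr_fun h 0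

theorem lin_pow_eq_sum (c : ℂ × ℂ) (d : ℕ) :
    lin c ^ d =
      ∑ m ∈ range (d + 1), monomial (expVec d m) (c.1 ^ m * c.2 ^ (d - m) * d.choose m) := by
  rw [lin, add_pow]
  refine sum_congr rfl fun m _ => ?_
  simp only [mul_pow, ← C_pow, X_pow_eq_monomial, C_mul_monomial, ← map_natCast C, expVec]
  rw [monomial_mul, mul_comm, C_mul_monomial]
  ring_nf

theorem coeff_lin_pow (c : ℂ × ℂ) {d m : ℕ} (hm : m ≤ d) :
    coeff (expVec d m) (lin c ^ d) = c.1 ^ m * c.2 ^ (d - m) * d.choose m := by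
  simp only [lin_pow_eq_sum, coeff_sum, coeff_monomial, (expVec_injective d).eq_iff]
  rw [sum_ite_eq', if_pos (mem_range.2 (by omega))]

/-- Normalised by the binomial coefficients, so that the catalecticant of `(a * x + b * y) ^ d` is
the rank-one matrix `(a ^ (i + j) * b ^ (d - i - j))`. -/
noncomputable def catalecticant (d k : ℕ) (F : MvPolynomial (Fin 2) ℂ) :
    Matrix (Fin (k + 1)) (Fin (d - k + 1)) ℂ :=
  Matrix.of fun i j => coeff (expVec d (i + j)) F / d.choose (i + j)

theorem catalecticant_sum_C_mul_lin_pow {d k n : ℕ} (hk : k ≤ d) (a : Fin n → ℂ)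
    (c : Fin n → ℂ × ℂ) :
    catalecticant d k (∑ t, C (a t) * lin (c t) ^ d) =
      Matrix.of (fun (i : Fin (k + 1)) t => a t * (c t).1 ^ (i : ℕ) * (c t).2 ^ (k - i)) *
        Matrix.of (fun t (j : Fin (d - k + 1)) => (c t).1 ^ (j : ℕ) * (c t).2 ^ (d - k - j)) := by
  ext i j
  have hij : (i : ℕ) + j ≤ d := by omega
  have hchoose : (d.choose (i + j) : ℂ) ≠ 0 := Nat.cast_ne_zero.2 (Nat.choose_pos hij).ne'
  simp only [catalecticant, Matrix.of_apply, Matrix.mul_apply, coeff_sum, coeff_C_mul,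
    coeff_lin_pow _ hij, sum_div]
  refine sum_congr rfl fun t _ => ?_
  rw [show d - (i + j) = (k - i) + (d - k - j) by omega]
  field_simp
  ring

theorem rank_catalecticant_le {d k n : ℕ} (hk : k ≤ d) {F : MvPolynomial (Fin 2) ℂ}
    {a : Fin n → ℂ} {c : Fin n → ℂ × ℂ} (hF : F = ∑ t, C (a t) * lin (c t) ^ d) :
    (catalecticant d k F).rank ≤ n := by
  rw [hF, catalecticant_sum_C_mul_lin_pow hk]
  exact (Matrix.rank_mul_le_left _ _).trans (Matrix.rank_le_width _)

theorem xryr_x_plus_y_eq_monomial_add_monomial (r : ℕ) :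
    (X 0 ^ r * X 1 ^ r * (X 0 + X 1) : MvPolynomial (Fin 2) ℂ) =
      monomial (expVec (2 * r + 1) r) 1 + monomial (expVec (2 * r + 1) (r + 1)) 1 := by
  rw [expVec, expVec, show 2 * r + 1 - r = r + 1 by omega, show 2 * r + 1 - (r + 1) = r by omega]
  simp only [X_pow_eq_monomial, mul_add]
  simp only [X, monomial_mul, mul_one]
  rw [add_comm]
  congr 3 <;> ext i <;> fin_cases i <;> simp [add_comm]

theorem coeff_expVec_xryr_x_plus_y (r m : ℕ) :
    coeff (expVec (2 * r + 1) m) (X 0 ^ r * X 1 ^ r * (X 0 + X 1) : MvPolynomial (Fin 2) ℂ) =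
      if m = r ∨ m = r + 1 then 1 else 0 := by
  simp only [xryr_x_plus_y_eq_monomial_add_monomial, coeff_add, coeff_monomial,
    (expVec_injective _).eq_iff]
  split_ifs <;> first | omega | norm_num

theorem rank_catalecticant_xryr_x_plus_y (r : ℕ) :
    (catalecticant (2 * r + 1) r (X 0 ^ r * X 1 ^ r * (X 0 + X 1))).rank = r + 1 := by
  set A := catalecticant (2 * r + 1) r (X 0 ^ r * X 1 ^ r * (X 0 + X 1))
  refine le_antisymm (Matrix.rank_le_height A) ?_
  -- the columns `r + 1, r, …, 1` of `A` form an upper triangular block with nonzero diagonal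
  let col : Fin (r + 1) → Fin (2 * r + 1 - r + 1) := fun t => ⟨r + 1 - t, by omega⟩
  set M := A.submatrix id col
  have hM : M.IsUpperTriangular := fun i t (h : t < i) => by
    simp only [M, A, col, Matrix.submatrix_apply, id, catalecticant, Matrix.of_apply,
      coeff_expVec_xryr_x_plus_y]
    rw [if_neg (by omega), zero_div]
  have hdiag : ∀ t, M t t ≠ 0 := fun t => by
    simp only [M, A, col, Matrix.submatrix_apply, id, catalecticant, Matrix.of_apply,
      coeff_expVec_xryr_x_plus_y]
    rw [if_pos (by omega), one_div]
    exact inv_ne_zero (Nat.cast_ne_zero.2 (Nat.choose_pos (by omega)).ne')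
  have hdet : M.det ≠ 0 := by
    rw [Matrix.det_of_isUpperTriangular hM]
    exact prod_ne_zero_iff.2 fun t _ => hdiag t
  calc r + 1 = M.rank := by rw [Matrix.rank_of_det_ne_zero hdet, Fintype.card_fin]
    _ ≤ A.rank := Matrix.rank_submatrix_le A id col

theorem sum_pow_sub_pow_mul_neg_pow {ω : ℂ} {r m : ℕ} (hω : IsPrimitiveRoot ω (r + 2))
    (hm : m ≤ 2 * r + 1) :
    ∑ k ∈ range (r + 2), (ω ^ (2 * k) - ω ^ k) *
        (1 ^ m * (-ω ^ k) ^ (2 * r + 1 - m) * (2 * r + 1).choose m) =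
      (if m = r then (-1 : ℂ) ^ r * (r + 2) * (2 * r + 1).choose r else 0) +
        (if m = r + 1 then (-1 : ℂ) ^ r * (r + 2) * (2 * r + 1).choose r else 0) := by
  obtain ⟨p, hp⟩ : ∃ p, 2 * r + 1 - m = p := ⟨_, rfl⟩
  have hsum : ∑ k ∈ range (r + 2), (ω ^ (2 * k) - ω ^ k) *
        (1 ^ m * (-ω ^ k) ^ p * (2 * r + 1).choose m) =
      (-1) ^ p * (2 * r + 1).choose m *
        (∑ k ∈ range (r + 2), ω ^ (k * (p + 2)) - ∑ k ∈ range (r + 2), ω ^ (k * (p + 1))) := by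
    rw [← sum_sub_distrib, mul_sum]
    refine sum_congr rfl fun k _ => ?_
    ring
  rw [hp, hsum, hω.sum_pow_mul_eq_ite, hω.sum_pow_mul_eq_ite]
  have hdvd₂ := Nat.dvd_iff_eq_of_lt_two_mul (n := r + 2) (a := p + 2) (by omega) (by omega)
  have hdvd₁ := Nat.dvd_iff_eq_of_lt_two_mul (n := r + 2) (a := p + 1) (by omega) (by omega)
  simp only [hdvd₂, hdvd₁]
  push_cast
  rcases (show m = r ∨ m = r + 1 ∨ (m ≠ r ∧ m ≠ r + 1) by omega) with rfl | rfl | ⟨hr, hr'⟩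
  · rw [show p = m + 1 by omega, if_neg (by omega), if_pos rfl, if_pos rfl, if_neg (by omega)]
    ring
  · rw [show p = r by omega, if_pos rfl, if_neg (by omega), if_neg (by omega), if_pos rfl,
      Nat.choose_symm_half]
    ring
  · rw [if_neg (by omega), if_neg (by omega), if_neg hr, if_neg hr']
    ring

theorem sum_pow_sub_pow_mul_lin_pow {ω : ℂ} {r : ℕ} (hω : IsPrimitiveRoot ω (r + 2)) :
    ∑ k ∈ range (r + 2), C (ω ^ (2 * k) - ω ^ k) * lin (1, -ω ^ k) ^ (2 * r + 1) =
      C ((-1 : ℂ) ^ r * (r + 2) * (2 * r + 1).choose r) * (X 0 ^ r * X 1 ^ r * (X 0 + X 1)) := by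
  simp_rw [lin_pow_eq_sum, mul_sum, C_mul_monomial]
  rw [sum_comm, xryr_x_plus_y_eq_monomial_add_monomial, mul_add]
  simp only [C_mul_monomial, mul_one]
  calc _ = ∑ m ∈ range (2 * r + 1 + 1), monomial (expVec (2 * r + 1) m)
        ((if m = r then (-1 : ℂ) ^ r * (r + 2) * (2 * r + 1).choose r else 0) +
          (if m = r + 1 then (-1 : ℂ) ^ r * (r + 2) * (2 * r + 1).choose r else 0)) :=
        sum_congr rfl fun m hm => by
          rw [← map_sum, sum_pow_sub_pow_mul_neg_pow hω (Nat.lt_succ_iff.1 (mem_range.1 hm))]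
    _ = _ := by
      simp only [map_add, sum_add_distrib, apply_ite (monomial _), map_zero, sum_ite_eq', mem_range]
      rw [if_pos (by omega), if_pos (by omega)]

theorem exists_waring_decomposition_xryr_x_plus_y (r : ℕ) :
    ∃ (a : Fin (r + 1) → ℂ) (c : Fin (r + 1) → ℂ × ℂ),
      (X 0 ^ r * X 1 ^ r * (X 0 + X 1) : MvPolynomial (Fin 2) ℂ) =
        ∑ i, C (a i) * lin (c i) ^ (2 * r + 1) := by
  obtain ⟨ω, hω⟩ : ∃ ω : ℂ, IsPrimitiveRoot ω (r + 2) :=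
    ⟨_, Complex.isPrimitiveRoot_exp (r + 2) (by omega)⟩
  set K : ℂ := (-1) ^ r * (r + 2) * (2 * r + 1).choose r
  have hK : K ≠ 0 := by
    have : (r + 2 : ℂ) ≠ 0 := by exact_mod_cast (show r + 2 ≠ 0 by omega)
    have : ((2 * r + 1).choose r : ℂ) ≠ 0 := Nat.cast_ne_zero.2 (Nat.choose_pos (by omega)).ne'
    simp_all [K]
  refine ⟨fun i => K⁻¹ * (ω ^ (2 * (i + 1 : ℕ)) - ω ^ (i + 1 : ℕ)), fun i => (1, -ω ^ (i + 1 : ℕ)),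
    ?_⟩
  have h := sum_pow_sub_pow_mul_lin_pow hω
  rw [sum_range_succ', ← Fin.sum_univ_eq_sum_range] at h
  simp only [mul_zero, pow_zero, sub_self, map_zero, zero_mul, add_zero] at h
  rw [← mul_right_inj' (C_ne_zero.2 hK), ← h, mul_sum]
  simp only [← mul_assoc, ← C_mul, mul_inv_cancel_left₀ hK]

theorem waring_rank_xryr_x_plus_y_general (r : ℕ) :
    waringRank (2 * r + 1) (X (0 : Fin 2) ^ r * X 1 ^ r * (X 0 + X 1)) = r + 1 := by
  obtain ⟨a, c, hF⟩ := exists_waring_decomposition_xryr_x_plus_y r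
  refine le_antisymm (Nat.sInf_le ⟨a, c, hF⟩) (le_csInf ⟨r + 1, a, c, hF⟩ ?_)
  rintro n ⟨a', c', hF'⟩
  rw [← rank_catalecticant_xryr_x_plus_y r]
  exact rank_catalecticant_le (by omega) hF'

theorem waring_rank_xryr_x_plus_y (r : ℕ) (hr : 1 ≤ r) :
    waringRank (2 * r + 1) (X (0 : Fin 2) ^ r * X 1 ^ r * (X 0 + X 1)) = r + 1 :=
  waring_rank_xryr_x_plus_y_general r
end

section
/- Fix d ≥ 4 and three pairwise non-proportional linear forms L_1, L_2, L_3 ∈ ℂ[x,y]_1. The set of forms F ∈ ℙ(ℂ[x,y]_d), up to scalar multiplication, with Waring rank two and divisible by L_1 L_2 L_3 is finite and its cardinality is at most d(d-1)(d-2). -/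
open MvPolynomial

/-!
If `F` has Waring rank two, then `F = A M^d + B N^d` with `M, N` independent, and `F` vanishes
at the zero `pᵢ` of `Lᵢ` exactly when the ratio `μᵢ = M(pᵢ) / N(pᵢ)` satisfies `A μᵢ^d = -B`.
Rescaling `M` so that `μ₁ = 1` writes `F = b (N^d - m^d)`, where the remaining ratios `ζ₂, ζ₃`
are distinct `d`-th roots of unity. Conversely the three linear conditions `m(pᵢ) = ζᵢ n(pᵢ)` on
the pair `(m, n)` cut out a single line, so `(ζ₂, ζ₃)` determines `F` up to a scalar, and there
are at most `d²` such pairs.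
-/

theorem exists_finset_card_le_of_classifier {α β : Type*} [Nonempty α] (T : Finset β)
    (Q : β → α → Prop) (r : α → α → Prop) (hQ : ∀ t a b, Q t a → Q t b → r a b) :
    ∃ S : Finset α, S.card ≤ T.card ∧ ∀ a, ∀ t ∈ T, Q t a → ∃ g ∈ S, r a g := by
  classical
  refine ⟨T.image fun t => Classical.epsilon (Q t), Finset.card_image_le, fun a t ht hQa => ?_⟩
  exact ⟨_, Finset.mem_image_of_mem _ ht, hQ t a _ hQa (Classical.epsilon_spec ⟨a, hQa⟩)⟩

theorem Polynomial.card_nthRootsFinset_le {R : Type*} [CommRing R] [IsDomain R] (n : ℕ) (a : R) :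
    (nthRootsFinset n a).card ≤ n := by
  classical
  rw [nthRootsFinset_def]
  exact (Multiset.toFinset_card_le _).trans (card_nthRoots n a)

section Wedge

variable {R : Type*} [CommRing R]

def wedge (u v : R × R) : R := u.1 * v.2 - u.2 * v.1

@[simp]
theorem wedge_self (u : R × R) : wedge u u = 0 := by
  simp only [wedge]; ring

@[simp]
theorem wedge_zero_left (v : R × R) : wedge 0 v = 0 := by
  simp [wedge]

theorem wedge_comm (u v : R × R) : wedge u v = -wedge v u := by
  simp only [wedge]; ring

@[simp]
theorem wedge_smul_left (t : R) (u v : R × R) : wedge (t • u) v = t * wedge u v := by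
  simp only [wedge, Prod.smul_fst, Prod.smul_snd, smul_eq_mul]; ring

@[simp]
theorem wedge_smul_right (t : R) (u v : R × R) : wedge u (t • v) = t * wedge u v := by
  simp only [wedge, Prod.smul_fst, Prod.smul_snd, smul_eq_mul]; ring

@[simp]
theorem wedge_sub_left (u u' v : R × R) : wedge (u - u') v = wedge u v - wedge u' v := by
  simp only [wedge, Prod.fst_sub, Prod.snd_sub]; ring

theorem ne_zero_of_wedge_ne_zero_left {u v : R × R} (h : wedge u v ≠ 0) : u ≠ 0 := by
  rintro rfl; exact h (wedge_zero_left v)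

theorem ne_zero_of_wedge_ne_zero_right {u v : R × R} (h : wedge u v ≠ 0) : v ≠ 0 := by
  rintro rfl; exact h (by simp [wedge])

variable {K : Type*} [Field K]

theorem exists_eq_smul_of_wedge_eq_zero {u L : K × K} (hL : L ≠ 0) (h : wedge u L = 0) :
    ∃ t : K, u = t • L := by
  simp only [wedge] at h
  by_cases hL₁ : L.1 = 0
  · have hL₂ : L.2 ≠ 0 := fun hL₂ => hL (Prod.ext hL₁ hL₂)
    have hu₁ : u.1 = 0 := by simpa [hL₁, hL₂] using h
    exact ⟨u.2 / L.2, Prod.ext (by simp [hL₁, hu₁]) (by simp [hL₂])⟩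
  · refine ⟨u.1 / L.1, Prod.ext (by simp [hL₁]) ?_⟩
    simp only [Prod.smul_snd, smul_eq_mul]
    field_simp
    linear_combination -h

theorem wedge_eq_zero_of_wedge_eq_zero {u v L : K × K} (hL : L ≠ 0) (hu : wedge u L = 0)
    (hv : wedge v L = 0) : wedge u v = 0 := by
  obtain ⟨s, rfl⟩ := exists_eq_smul_of_wedge_eq_zero hL hu
  obtain ⟨t, rfl⟩ := exists_eq_smul_of_wedge_eq_zero hL hv
  simp

theorem eq_zero_of_wedge_eq_zero {v L₁ L₂ : K × K} (h₁₂ : wedge L₁ L₂ ≠ 0)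
    (h₁ : wedge v L₁ = 0) (h₂ : wedge v L₂ = 0) : v = 0 := by
  obtain ⟨t, rfl⟩ := exists_eq_smul_of_wedge_eq_zero (ne_zero_of_wedge_ne_zero_left h₁₂) h₁
  rw [wedge_smul_left] at h₂
  simp [(mul_eq_zero.mp h₂).resolve_right h₁₂]

end Wedge

section Ratios

variable {K : Type*} [Field K] {L₁ L₂ L₃ : K × K} {ζ₂ ζ₃ : K}

-- `wedge m L` is the value of `lin m` at the zero of `lin L` (see `eval_lin`), so this says that
-- `lin m / lin n` takes the values `1, ζ₂, ζ₃` at the zeros of `lin L₁, lin L₂, lin L₃`.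
def HasRatios (L₁ L₂ L₃ : K × K) (ζ₂ ζ₃ : K) (m n : K × K) : Prop :=
  wedge m L₁ = wedge n L₁ ∧ wedge m L₂ = ζ₂ * wedge n L₂ ∧ wedge m L₃ = ζ₃ * wedge n L₃

theorem HasRatios.sub_smul {m n m' n' : K × K} (h : HasRatios L₁ L₂ L₃ ζ₂ ζ₃ m n)
    (h' : HasRatios L₁ L₂ L₃ ζ₂ ζ₃ m' n') (t : K) :
    HasRatios L₁ L₂ L₃ ζ₂ ζ₃ (m' - t • m) (n' - t • n) := by
  obtain ⟨h₁, h₂, h₃⟩ := h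
  obtain ⟨h₁', h₂', h₃'⟩ := h'
  simp only [HasRatios, wedge_sub_left, wedge_smul_left]
  exact ⟨by linear_combination h₁' - t * h₁, by linear_combination h₂' - t * h₂,
    by linear_combination h₃' - t * h₃⟩

theorem HasRatios.eq_zero {u v : K × K} (h₁₂ : wedge L₁ L₂ ≠ 0) (h₁₃ : wedge L₁ L₃ ≠ 0)
    (hζ : ζ₂ ≠ ζ₃) (h : HasRatios L₁ L₂ L₃ ζ₂ ζ₃ u v) (hv : wedge v L₁ = 0) : u = 0 ∧ v = 0 := by
  obtain ⟨h₁, h₂, h₃⟩ := h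
  have hL₁ := ne_zero_of_wedge_ne_zero_left h₁₂
  obtain ⟨s, rfl⟩ := exists_eq_smul_of_wedge_eq_zero hL₁ (h₁.trans hv)
  obtain ⟨t, rfl⟩ := exists_eq_smul_of_wedge_eq_zero hL₁ hv
  simp only [wedge_smul_left] at h₂ h₃
  have hs₂ : s = ζ₂ * t := mul_right_cancel₀ h₁₂ (by linear_combination h₂)
  have hs₃ : s = ζ₃ * t := mul_right_cancel₀ h₁₃ (by linear_combination h₃)
  have ht : t = 0 := by
    have : (ζ₂ - ζ₃) * t = 0 := by linear_combination hs₃ - hs₂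
    exact (mul_eq_zero.mp this).resolve_left (sub_ne_zero.mpr hζ)
  simp [hs₂, ht]

theorem HasRatios.exists_smul_eq {m n m' n' : K × K} (h₁₂ : wedge L₁ L₂ ≠ 0)
    (h₁₃ : wedge L₁ L₃ ≠ 0) (hζ : ζ₂ ≠ ζ₃) (hmn : wedge m n ≠ 0)
    (h : HasRatios L₁ L₂ L₃ ζ₂ ζ₃ m n) (h' : HasRatios L₁ L₂ L₃ ζ₂ ζ₃ m' n') :
    ∃ t : K, m' = t • m ∧ n' = t • n := by
  have hn : wedge n L₁ ≠ 0 := fun hn =>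
    hmn (wedge_eq_zero_of_wedge_eq_zero (ne_zero_of_wedge_ne_zero_left h₁₂) (h.1.trans hn) hn)
  set t := wedge n' L₁ / wedge n L₁
  have hv : wedge (n' - t • n) L₁ = 0 := by
    rw [wedge_sub_left, wedge_smul_left, div_mul_cancel₀ _ hn, sub_self]
  obtain ⟨hu₀, hv₀⟩ := (h.sub_smul h' t).eq_zero h₁₂ h₁₃ hζ hv
  exact ⟨t, sub_eq_zero.mp hu₀, sub_eq_zero.mp hv₀⟩

theorem exists_ratio_of_pow_combination_eq_zero {d : ℕ} (hd : d ≠ 0) {A B : K} {M N L : K × K}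
    (hA : A ≠ 0) (hMN : wedge M N ≠ 0) (hL : L ≠ 0)
    (h : A * wedge M L ^ d + B * wedge N L ^ d = 0) :
    ∃ μ : K, wedge M L = μ * wedge N L ∧ A * μ ^ d = -B := by
  have hN : wedge N L ≠ 0 := by
    intro hN
    rw [hN, zero_pow hd, mul_zero, add_zero] at h
    exact hMN (wedge_eq_zero_of_wedge_eq_zero hL
      (pow_eq_zero_iff hd |>.mp ((mul_eq_zero.mp h).resolve_left hA)) hN)
  refine ⟨wedge M L / wedge N L, (div_mul_cancel₀ _ hN).symm, ?_⟩
  rw [div_pow]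
  field_simp
  linear_combination h

theorem ratio_ne_of_wedge_ne_zero {M N L₂ L₃ : K × K} {μ₂ μ₃ : K} (h₂₃ : wedge L₂ L₃ ≠ 0)
    (hMN : wedge M N ≠ 0) (h₂ : wedge M L₂ = μ₂ * wedge N L₂)
    (h₃ : wedge M L₃ = μ₃ * wedge N L₃) : μ₂ ≠ μ₃ := by
  rintro rfl
  have hM : M - μ₂ • N = 0 :=
    eq_zero_of_wedge_eq_zero h₂₃ (by simp [h₂]) (by simp [h₃])
  simp [sub_eq_zero.mp hM] at hMN

theorem exists_hasRatios {d : ℕ} (hd : d ≠ 0) {A B : K} {M N : K × K}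
    (h₁₂ : wedge L₁ L₂ ≠ 0) (h₂₃ : wedge L₂ L₃ ≠ 0) (h₁₃ : wedge L₁ L₃ ≠ 0)
    (hA : A ≠ 0) (hB : B ≠ 0) (hMN : wedge M N ≠ 0)
    (h₁ : A * wedge M L₁ ^ d + B * wedge N L₁ ^ d = 0)
    (h₂ : A * wedge M L₂ ^ d + B * wedge N L₂ ^ d = 0)
    (h₃ : A * wedge M L₃ ^ d + B * wedge N L₃ ^ d = 0) :
    ∃ ζ₂ ζ₃ μ : K, ζ₂ ^ d = 1 ∧ ζ₃ ^ d = 1 ∧ ζ₂ ≠ ζ₃ ∧ μ ≠ 0 ∧ A * μ ^ d = -B ∧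
      HasRatios L₁ L₂ L₃ ζ₂ ζ₃ (μ⁻¹ • M) N := by
  obtain ⟨μ₁, hμ₁, hk₁⟩ := exists_ratio_of_pow_combination_eq_zero hd hA hMN
    (ne_zero_of_wedge_ne_zero_left h₁₂) h₁
  obtain ⟨μ₂, hμ₂, hk₂⟩ := exists_ratio_of_pow_combination_eq_zero hd hA hMN
    (ne_zero_of_wedge_ne_zero_left h₂₃) h₂
  obtain ⟨μ₃, hμ₃, hk₃⟩ := exists_ratio_of_pow_combination_eq_zero hd hA hMN
    (ne_zero_of_wedge_ne_zero_right h₁₃) h₃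
  have hμ₁0 : μ₁ ≠ 0 := by
    rintro rfl
    exact hB (by simpa [zero_pow hd] using hk₁.symm)
  have hroot : ∀ μ : K, A * μ ^ d = -B → (μ / μ₁) ^ d = 1 := fun μ hk => by
    rw [div_pow, div_eq_one_iff_eq (pow_ne_zero d hμ₁0)]
    exact mul_left_cancel₀ hA (hk.trans hk₁.symm)
  refine ⟨μ₂ / μ₁, μ₃ / μ₁, μ₁, hroot μ₂ hk₂, hroot μ₃ hk₃,
    fun h => ratio_ne_of_wedge_ne_zero h₂₃ hMN hμ₂ hμ₃ ((div_left_inj' hμ₁0).mp h), hμ₁0, hk₁,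
    ?_, ?_, ?_⟩ <;> simp only [wedge_smul_left] <;> field_simp
  · exact hμ₁
  · exact hμ₂
  · exact hμ₃

end Ratios

theorem lin_smul (t : ℂ) (c : ℂ × ℂ) : lin (t • c) = C t * lin c := by
  simp only [lin, Prod.smul_fst, Prod.smul_snd, smul_eq_mul, map_mul]
  ring

@[simp]
theorem lin_zero : lin 0 = 0 := by
  simp [lin]

-- `![L.2, -L.1]` is the zero of `lin L`.
theorem eval_lin (c L : ℂ × ℂ) : eval ![L.2, -L.1] (lin c) = wedge c L := by
  simp [lin, wedge]
  ring

theorem eval_eq_zero_of_lin_dvd {L : ℂ × ℂ} {F : MvPolynomial (Fin 2) ℂ} (h : lin L ∣ F) :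
    eval ![L.2, -L.1] F = 0 := by
  obtain ⟨Q, rfl⟩ := h
  simp [eval_lin]

theorem waringRank_le {d r : ℕ} {F : MvPolynomial (Fin 2) ℂ} (a : Fin r → ℂ)
    (c : Fin r → ℂ × ℂ) (h : F = ∑ i, C (a i) * lin (c i) ^ d) : waringRank d F ≤ r :=
  Nat.sInf_le ⟨a, c, h⟩

theorem waringRank_C_mul_lin_pow_le_one (d : ℕ) (a : ℂ) (c : ℂ × ℂ) :
    waringRank d (C a * lin c ^ d) ≤ 1 :=
  waringRank_le (fun _ => a) (fun _ => c) (by simp)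

theorem exists_eq_sum_of_waringRank_eq {d r : ℕ} {F : MvPolynomial (Fin 2) ℂ}
    (hr : waringRank d F = r) (hr₀ : r ≠ 0) :
    ∃ (a : Fin r → ℂ) (c : Fin r → ℂ × ℂ), F = ∑ i, C (a i) * lin (c i) ^ d := by
  unfold waringRank at hr
  have := Nat.sInf_mem (Nat.nonempty_of_pos_sInf (hr ▸ Nat.pos_of_ne_zero hr₀))
  rwa [hr] at this

theorem exists_eq_of_waringRank_eq_two {d : ℕ} (hd : d ≠ 0) {F : MvPolynomial (Fin 2) ℂ}
    (hr : waringRank d F = 2) :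
    ∃ (A B : ℂ) (M N : ℂ × ℂ), A ≠ 0 ∧ B ≠ 0 ∧ wedge M N ≠ 0 ∧
      F = C A * lin M ^ d + C B * lin N ^ d := by
  obtain ⟨a, c, hF⟩ := exists_eq_sum_of_waringRank_eq hr two_ne_zero
  rw [Fin.sum_univ_two] at hF
  have hnot : ∀ a₀ c₀, F ≠ C a₀ * lin c₀ ^ d := fun a₀ c₀ h => by
    have := waringRank_C_mul_lin_pow_le_one d a₀ c₀
    rw [← h, hr] at this
    omega
  refine ⟨a 0, a 1, c 0, c 1, fun h => hnot (a 1) (c 1) (by simp [hF, h]),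
    fun h => hnot (a 0) (c 0) (by simp [hF, h]), fun h => ?_, hF⟩
  by_cases hM : c 0 = 0
  · exact hnot (a 1) (c 1) (by simp [hF, hM, zero_pow hd])
  · obtain ⟨t, ht⟩ := exists_eq_smul_of_wedge_eq_zero hM (by rw [wedge_comm, h, neg_zero])
    refine hnot (a 0 + a 1 * t ^ d) (c 0) ?_
    rw [hF, ht, lin_smul, mul_pow, ← map_pow, map_add, map_mul]
    ring

def IsPowDiffWithRatios (d : ℕ) (L₁ L₂ L₃ : ℂ × ℂ) (ζ₂ ζ₃ : ℂ)
    (F : MvPolynomial (Fin 2) ℂ) : Prop :=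
  ∃ (b : ℂ) (m n : ℂ × ℂ), b ≠ 0 ∧ wedge m n ≠ 0 ∧ F = C b * (lin n ^ d - lin m ^ d) ∧
    HasRatios L₁ L₂ L₃ ζ₂ ζ₃ m n

theorem IsPowDiffWithRatios.exists_eq_C_mul {d : ℕ} {L₁ L₂ L₃ : ℂ × ℂ} {ζ₂ ζ₃ : ℂ}
    {F F' : MvPolynomial (Fin 2) ℂ} (h₁₂ : wedge L₁ L₂ ≠ 0) (h₁₃ : wedge L₁ L₃ ≠ 0)
    (hζ : ζ₂ ≠ ζ₃) (hF : IsPowDiffWithRatios d L₁ L₂ L₃ ζ₂ ζ₃ F)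
    (hF' : IsPowDiffWithRatios d L₁ L₂ L₃ ζ₂ ζ₃ F') : ∃ c : ℂ, c ≠ 0 ∧ F' = C c * F := by
  obtain ⟨b, m, n, hb, hmn, rfl, h⟩ := hF
  obtain ⟨b', m', n', hb', hmn', rfl, h'⟩ := hF'
  obtain ⟨t, rfl, rfl⟩ := h.exists_smul_eq h₁₂ h₁₃ hζ hmn h'
  have ht : t ≠ 0 := by
    rintro rfl
    simp at hmn'
  refine ⟨b' * t ^ d / b, by positivity, ?_⟩
  rw [lin_smul, lin_smul, mul_pow, mul_pow, ← mul_sub, ← map_pow, ← mul_assoc, ← map_mul,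
    ← mul_assoc, ← map_mul]
  congr 2
  field_simp

theorem exists_isPowDiffWithRatios {d : ℕ} (hd : d ≠ 0) {L₁ L₂ L₃ : ℂ × ℂ}
    (h₁₂ : wedge L₁ L₂ ≠ 0) (h₂₃ : wedge L₂ L₃ ≠ 0) (h₁₃ : wedge L₁ L₃ ≠ 0)
    {F : MvPolynomial (Fin 2) ℂ} (hr : waringRank d F = 2)
    (hdvd : lin L₁ * lin L₂ * lin L₃ ∣ F) :
    ∃ ζ₂ ζ₃ : ℂ, ζ₂ ^ d = 1 ∧ ζ₃ ^ d = 1 ∧ ζ₂ ≠ ζ₃ ∧ IsPowDiffWithRatios d L₁ L₂ L₃ ζ₂ ζ₃ F := by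
  obtain ⟨A, B, M, N, hA, hB, hMN, rfl⟩ := exists_eq_of_waringRank_eq_two hd hr
  have hvanish : ∀ L, lin L ∣ C A * lin M ^ d + C B * lin N ^ d →
      A * wedge M L ^ d + B * wedge N L ^ d = 0 := fun L hL => by
    simpa [eval_lin] using eval_eq_zero_of_lin_dvd hL
  obtain ⟨ζ₂, ζ₃, μ, hζ₂, hζ₃, hζ, hμ, hAμ, hR⟩ := exists_hasRatios hd h₁₂ h₂₃ h₁₃ hA hB hMN
    (hvanish L₁ ((dvd_mul_of_dvd_left (dvd_mul_right _ _) _).trans hdvd))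
    (hvanish L₂ ((dvd_mul_of_dvd_left (dvd_mul_left _ _) _).trans hdvd))
    (hvanish L₃ ((dvd_mul_left _ _).trans hdvd))
  refine ⟨ζ₂, ζ₃, hζ₂, hζ₃, hζ, B, μ⁻¹ • M, N, hB, by simpa [hμ] using hMN, ?_, hR⟩
  have hM : lin M = C μ * lin (μ⁻¹ • M) := by
    rw [lin_smul, ← mul_assoc, ← map_mul, mul_inv_cancel₀ hμ, map_one, one_mul]
  rw [hM, mul_pow, ← map_pow, ← mul_assoc, ← map_mul, hAμ, map_neg]
  ring

theorem rank_two_multiples_finite (d : ℕ) (hd : 4 ≤ d) (L₁ L₂ L₃ : ℂ × ℂ)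
    (h12 : L₁.1 * L₂.2 ≠ L₁.2 * L₂.1) (h23 : L₂.1 * L₃.2 ≠ L₂.2 * L₃.1)
    (h13 : L₁.1 * L₃.2 ≠ L₁.2 * L₃.1) :
    ∃ S : Finset (MvPolynomial (Fin 2) ℂ), S.card ≤ d * (d - 1) * (d - 2) ∧
      ∀ F : MvPolynomial (Fin 2) ℂ, F.IsHomogeneous d → waringRank d F = 2 →
        lin L₁ * lin L₂ * lin L₃ ∣ F →
        ∃ G ∈ S, ∃ c : ℂ, c ≠ 0 ∧ F = C c * G := by
  have hd₀ : 0 < d := by omega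
  have w₁₂ : wedge L₁ L₂ ≠ 0 := sub_ne_zero.mpr h12
  have w₁₃ : wedge L₁ L₃ ≠ 0 := sub_ne_zero.mpr h13
  let T := Polynomial.nthRootsFinset d (1 : ℂ) ×ˢ Polynomial.nthRootsFinset d (1 : ℂ)
  obtain ⟨S, hS, hcover⟩ := exists_finset_card_le_of_classifier T
    (fun ζ F => ζ.1 ≠ ζ.2 ∧ IsPowDiffWithRatios d L₁ L₂ L₃ ζ.1 ζ.2 F)
    (fun F G => ∃ c : ℂ, c ≠ 0 ∧ F = C c * G)
    (fun ζ F G hF hG => hG.2.exists_eq_C_mul w₁₂ w₁₃ hF.1 hF.2)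
  refine ⟨S, ?_, fun F _ hr hdvd => ?_⟩
  · have hT : T.card ≤ d * d := by
      rw [Finset.card_product]
      exact Nat.mul_le_mul (Polynomial.card_nthRootsFinset_le d 1)
        (Polynomial.card_nthRootsFinset_le d 1)
    obtain ⟨k, rfl⟩ : ∃ k, d = k + 4 := ⟨d - 4, by omega⟩
    calc S.card ≤ (k + 4) * (k + 4) := hS.trans hT
      _ ≤ (k + 4) * (k + 4 - 1) * (k + 4 - 2) := by
        simp only [show k + 4 - 1 = k + 3 by omega,
          show k + 4 - 2 = k + 2 by omega]
        nlinarith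
  · obtain ⟨ζ₂, ζ₃, hζ₂, hζ₃, hζ, hF⟩ :=
      exists_isPowDiffWithRatios hd₀.ne' w₁₂ (sub_ne_zero.mpr h23) w₁₃ hr hdvd
    exact hcover F (ζ₂, ζ₃) (by simp [T, Polynomial.mem_nthRootsFinset hd₀, hζ₂, hζ₃]) ⟨hζ, hF⟩
end
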